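/- If the set U ⊆ [0, π) of prescribed slopes contains 0, π/3 and 2π/3, then the origami set M(U) is a subring of ℂ. Consequently, every origami set M(U) is contained in an origami ring, namely M(U ∪ {π/3, 2π/3}). -/

import Mathlib

open Real Complex Set

/-- The `θ`-projection of `z`: the unique real `x` with `z ∈ x + ℝ·exp(iθ)`
(for `θ ∈ (0,π)`); explicitly `x = Re z − Im z · cos θ / sin θ`. -/
noncomputable def proj (θ : ℝ) (z : ℂ) : ℝ := z.re - z.im * Real.cos θ / Real.sin θ

/-- `inter α β r s` is the (unique, for distinct `α β ∈ (0,π)`) complex number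
with `α`-projection `r` and `β`-projection `s`, i.e. `⟦r,s⟧_{α,β}`. -/
noncomputable def inter (α β r s : ℝ) : ℂ :=
  Classical.epsilon fun z : ℂ => proj α z = r ∧ proj β z = s

/-- The line through `z` with slope (angle) `θ`. -/
def lineThru (z : ℂ) (θ : ℝ) : Set ℂ := {w | ∃ t : ℝ, w = z + t * Complex.exp (θ * Complex.I)}

/-- The recursively defined stages of the origami set. -/
def origamiStep (U : Set ℝ) : ℕ → Set ℂ
  | 0 => {0, 1}
  | k + 1 => {w | ∃ z ∈ origamiStep U k, ∃ z' ∈ origamiStep U k,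
      ∃ γ ∈ U, ∃ γ' ∈ U, γ ≠ γ' ∧ w ∈ lineThru z γ ∧ w ∈ lineThru z' γ'}

/-- The origami set `M(U)`. -/
def origami (U : Set ℝ) : Set ℂ := ⋃ k, origamiStep U k

/-- The real part `M_ℝ = M(U) ∩ ℝ`, viewed as a set of reals. -/
def origamiR (U : Set ℝ) : Set ℝ := {x : ℝ | (x : ℂ) ∈ origami U}

/-!
With `ω = e^{iπ/3}` the slopes `0, π/3, 2π/3` are the directions `1, ω, ω - 1`. Intersecting
the lines of slopes `π/3` and `2π/3` through `x = c + dω` with the real axis shows that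
`x ∈ M(U)` iff `c` and `c + d` lie in the real part `R = M(U) ∩ ℝ`. Real multiplication by an
element of `R` maps lines to lines of the same slopes, so `R · M(U) ⊆ M(U)`. Together these make
`R` a subring of `ℝ` and `M(U) = R + Rω`, which is a ring because `ω² = ω - 1`.
-/

noncomputable def ω : ℂ := Complex.exp (↑(π / 3) * I)

lemma exp_zero_mul_I : Complex.exp (↑(0 : ℝ) * I) = 1 := by simp

lemma exp_pi_div_three_mul_I : Complex.exp (↑(π / 3) * I) = ω := rfl

lemma ω_re : ω.re = 1 / 2 := by
  rw [ω, exp_ofReal_mul_I_re, cos_pi_div_three]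

lemma ω_im : ω.im = √3 / 2 := by
  rw [ω, exp_ofReal_mul_I_im, sin_pi_div_three]

lemma ω_sq : ω ^ 2 = ω - 1 := by
  have h3 : √3 * √3 = 3 := Real.mul_self_sqrt (by norm_num)
  apply Complex.ext <;> simp only [sq, mul_re, mul_im, sub_re, sub_im, one_re, one_im, ω_re, ω_im]
  · linarith
  · ring

lemma exp_two_pi_div_three_mul_I : Complex.exp (↑(2 * π / 3) * I) = ω - 1 := by
  rw [← ω_sq, ω, ← Complex.exp_nat_mul]
  push_cast
  ring_nf

lemma exists_eq_add_mul_ω (x : ℂ) : ∃ c d : ℝ, x = c + d * ω := by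
  have h3 : √3 ≠ 0 := by positivity
  refine ⟨x.re - x.im / √3, 2 * x.im / √3, ?_⟩
  apply Complex.ext <;>
    simp only [add_re, add_im, mul_re, mul_im, ofReal_re, ofReal_im, ω_re, ω_im] <;>
    field_simp <;> ring

lemma ofReal_mul_mem_lineThru {z w : ℂ} {γ : ℝ} (r : ℝ) (hw : w ∈ lineThru z γ) :
    r * w ∈ lineThru (r * z) γ := by
  obtain ⟨t, rfl⟩ := hw
  exact ⟨r * t, by push_cast; ring⟩

section Origami

variable {U : Set ℝ}

lemma zero_mem_origami : (0 : ℂ) ∈ origami U := mem_iUnion.2 ⟨0, by simp [origamiStep]⟩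

lemma one_mem_origami : (1 : ℂ) ∈ origami U := mem_iUnion.2 ⟨0, by simp [origamiStep]⟩

lemma origamiStep_monotone (hU : U.Nontrivial) : Monotone (origamiStep U) := by
  obtain ⟨γ, hγ, γ', hγ', hne⟩ := hU
  exact monotone_nat_of_le_succ fun k z hz =>
    ⟨z, hz, z, hz, γ, hγ, γ', hγ', hne, ⟨0, by simp⟩, ⟨0, by simp⟩⟩

lemma mem_origami_of_mem_lineThru (hU : U.Nontrivial) {z z' w : ℂ} {γ γ' : ℝ}
    (hz : z ∈ origami U) (hz' : z' ∈ origami U) (hγ : γ ∈ U) (hγ' : γ' ∈ U) (hne : γ ≠ γ')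
    (hw : w ∈ lineThru z γ) (hw' : w ∈ lineThru z' γ') : w ∈ origami U := by
  obtain ⟨k, hk⟩ := mem_iUnion.1 hz
  obtain ⟨k', hk'⟩ := mem_iUnion.1 hz'
  have hmono := origamiStep_monotone hU
  exact mem_iUnion.2 ⟨max k k' + 1, z, hmono (le_max_left k k') hk,
    z', hmono (le_max_right k k') hk', γ, hγ, γ', hγ', hne, hw, hw'⟩

lemma ofReal_mul_mem_origami (hU : U.Nontrivial) {r : ℝ} {x : ℂ} (hr : (r : ℂ) ∈ origami U)
    (hx : x ∈ origami U) : r * x ∈ origami U := by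
  suffices ∀ k, ∀ x ∈ origamiStep U k, r * x ∈ origami U by
    obtain ⟨k, hk⟩ := mem_iUnion.1 hx
    exact this k x hk
  intro k
  induction k with
  | zero =>
    rintro x (rfl | rfl)
    · simpa using zero_mem_origami
    · simpa using hr
  | succ k ih =>
    rintro x ⟨z, hz, z', hz', γ, hγ, γ', hγ', hne, hx, hx'⟩
    exact mem_origami_of_mem_lineThru hU (ih z hz) (ih z' hz') hγ hγ' hne
      (ofReal_mul_mem_lineThru r hx) (ofReal_mul_mem_lineThru r hx')

end Origami

lemma origami_mono : Monotone origami := by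
  intro U U' h
  refine iUnion_mono fun k => ?_
  induction k with
  | zero => exact subset_rfl
  | succ k ih =>
    rintro w ⟨z, hz, z', hz', γ, hγ, γ', hγ', hne, hw, hw'⟩
    exact ⟨z, ih hz, z', ih hz', γ, h hγ, γ', h hγ', hne, hw, hw'⟩

section SpecialAngles

variable {U : Set ℝ} (hU : {0, π / 3, 2 * π / 3} ⊆ U)
include hU

lemma nontrivial_of_special_angles_subset : U.Nontrivial :=
  ⟨0, hU (by simp), π / 3, hU (by simp), (by positivity : 0 < π / 3).ne⟩

lemma add_mul_ω_mem_origami_iff {c d : ℝ} :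
    (c + d * ω : ℂ) ∈ origami U ↔ c ∈ origamiR U ∧ c + d ∈ origamiR U := by
  have hU' := nontrivial_of_special_angles_subset hU
  have h0 : (0 : ℝ) ≠ π / 3 := (by positivity : 0 < π / 3).ne
  have h02 : (0 : ℝ) ≠ 2 * π / 3 := (by positivity : 0 < 2 * π / 3).ne
  have h12 : π / 3 ≠ 2 * π / 3 := by linarith [pi_pos]
  constructor
  · intro hx
    refine ⟨mem_origami_of_mem_lineThru hU' zero_mem_origami hx (hU (by simp)) (hU (by simp)) h0
        ⟨c, by rw [exp_zero_mul_I]; ring⟩ ⟨-d, by rw [exp_pi_div_three_mul_I]; push_cast; ring⟩,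
      mem_origami_of_mem_lineThru hU' zero_mem_origami hx (hU (by simp)) (hU (by simp)) h02
        ⟨c + d, by rw [exp_zero_mul_I]; push_cast; ring⟩ ⟨-d, by rw [exp_two_pi_div_three_mul_I]; push_cast; ring⟩⟩
  · rintro ⟨hc, hcd⟩
    exact mem_origami_of_mem_lineThru hU' hc hcd (hU (by simp)) (hU (by simp)) h12
      ⟨d, by rw [exp_pi_div_three_mul_I]⟩ ⟨d, by rw [exp_two_pi_div_three_mul_I]; push_cast; ring⟩

lemma ofReal_mul_ω_mem_origami {a : ℝ} (ha : a ∈ origamiR U) : (a * ω : ℂ) ∈ origami U := by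
  have hω : ω ∈ origami U := by
    simpa using (add_mul_ω_mem_origami_iff hU (c := 0) (d := 1)).2
      ⟨by simpa [origamiR] using zero_mem_origami, by simpa [origamiR] using one_mem_origami⟩
  exact ofReal_mul_mem_origami (nontrivial_of_special_angles_subset hU) ha hω

def origamiRealSubring : Subring ℝ where
  carrier := origamiR U
  zero_mem' := by simpa [origamiR] using zero_mem_origami
  one_mem' := by simpa [origamiR] using one_mem_origami
  add_mem' {a b} ha hb := by
    have hab : (a + b * ω : ℂ) ∈ origami U :=
      mem_origami_of_mem_lineThru (nontrivial_of_special_angles_subset hU) ha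
        (ofReal_mul_ω_mem_origami hU hb) (hU (by simp)) (hU (by simp))
        (by positivity : 0 < π / 3).ne' ⟨b, by rw [exp_pi_div_three_mul_I]⟩ ⟨a, by rw [exp_zero_mul_I]; ring⟩
    exact ((add_mul_ω_mem_origami_iff hU).1 hab).2
  neg_mem' {a} ha := by
    have hneg : ((-a : ℝ) + a * ω : ℂ) ∈ origami U :=
      mem_origami_of_mem_lineThru (nontrivial_of_special_angles_subset hU)
        (ofReal_mul_ω_mem_origami hU ha) zero_mem_origami (hU (by simp)) (hU (by simp))
        (by positivity : 0 < 2 * π / 3).ne ⟨-a, by rw [exp_zero_mul_I]; push_cast; ring⟩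
        ⟨a, by rw [exp_two_pi_div_three_mul_I]; push_cast; ring⟩
    exact ((add_mul_ω_mem_origami_iff hU).1 hneg).1
  mul_mem' {a b} ha hb := by
    simpa [origamiR] using ofReal_mul_mem_origami (nontrivial_of_special_angles_subset hU) ha hb

lemma mem_origami_iff {x : ℂ} :
    x ∈ origami U ↔ ∃ c ∈ origamiRealSubring hU, ∃ d ∈ origamiRealSubring hU, x = c + d * ω := by
  constructor
  · intro hx
    obtain ⟨c, d, rfl⟩ := exists_eq_add_mul_ω x
    obtain ⟨hc, hcd⟩ := (add_mul_ω_mem_origami_iff hU).1 hx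
    have hc : c ∈ origamiRealSubring hU := hc
    have hcd : c + d ∈ origamiRealSubring hU := hcd
    exact ⟨c, hc, d, by simpa using sub_mem hcd hc, rfl⟩
  · rintro ⟨c, hc, d, hd, rfl⟩
    exact (add_mul_ω_mem_origami_iff hU).2 ⟨hc, add_mem hc hd⟩

def origamiSubring : Subring ℂ where
  carrier := origami U
  zero_mem' := zero_mem_origami
  one_mem' := one_mem_origami
  add_mem' {x y} hx hy := by
    obtain ⟨c, hc, d, hd, rfl⟩ := (mem_origami_iff hU).1 hx
    obtain ⟨c', hc', d', hd', rfl⟩ := (mem_origami_iff hU).1 hy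
    exact (mem_origami_iff hU).2 ⟨c + c', add_mem hc hc', d + d', add_mem hd hd', by push_cast; ring⟩
  neg_mem' {x} hx := by
    obtain ⟨c, hc, d, hd, rfl⟩ := (mem_origami_iff hU).1 hx
    exact (mem_origami_iff hU).2 ⟨-c, neg_mem hc, -d, neg_mem hd, by push_cast; ring⟩
  mul_mem' {x y} hx hy := by
    obtain ⟨c, hc, d, hd, rfl⟩ := (mem_origami_iff hU).1 hx
    obtain ⟨c', hc', d', hd', rfl⟩ := (mem_origami_iff hU).1 hy
    refine (mem_origami_iff hU).2 ⟨c * c' - d * d', sub_mem (mul_mem hc hc') (mul_mem hd hd'),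
      c * d' + d * c' + d * d', add_mem (add_mem (mul_mem hc hd') (mul_mem hd hc')) (mul_mem hd hd'),
      ?_⟩
    push_cast
    linear_combination (d * d' : ℂ) * ω_sq

end SpecialAngles

theorem origami_ring_of_special_angles :
    (∀ U : Set ℝ, U ⊆ Set.Ico 0 Real.pi → (0 : ℝ) ∈ U →
      Real.pi / 3 ∈ U → 2 * Real.pi / 3 ∈ U →
      ∃ R : Subring ℂ, (R : Set ℂ) = origami U) ∧
    (∀ U : Set ℝ, U ⊆ Set.Ico 0 Real.pi → (0 : ℝ) ∈ U → 3 ≤ U.encard →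
      origami U ⊆ origami (U ∪ {Real.pi / 3, 2 * Real.pi / 3}) ∧
      ∃ R : Subring ℂ, (R : Set ℂ) = origami (U ∪ {Real.pi / 3, 2 * Real.pi / 3})) := by
  refine ⟨fun U _ h0 h1 h2 => ?_, fun U _ h0 _ => ⟨origami_mono subset_union_left, ?_⟩⟩
  · exact ⟨origamiSubring (insert_subset h0 (insert_subset h1 (singleton_subset_iff.2 h2))), rfl⟩
  · exact ⟨origamiSubring (insert_subset (mem_union_left _ h0) subset_union_right), rfl⟩
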